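/- Each of the matrices r₁, r₂, r₃ generating G₃₃₆ maps the lattice Λ = O·e₁ + O·e₂ + O·e₃ into itself, where O = Z[α], e₁ = (0,α,α), e₂ = (0,0,2), e₃ = (1,1,ᾱ). -/

import Mathlib

/-!
Since `α² = α - 2`, the set `𝒪 = ℤ + ℤα` is a subring of `ℂ`, and `Λ` is closed under addition
and under multiplication by `𝒪`. A matrix therefore preserves `Λ` as soon as it maps the three
generators `e₁, e₂, e₃` into `Λ`, and for `r₁, r₂, r₃` this is an explicit computation: in the
basis `e₁, e₂, e₃` all three have entries in `{0, ±1, ±α, ±ᾱ}`.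
-/

noncomputable section

def Kalpha : ℂ := (1 + Complex.I * Real.sqrt 7) / 2
def Kalphabar : ℂ := (1 - Complex.I * Real.sqrt 7) / 2

/-- Membership in `𝒪 = ℤ[α] = ℤ + ℤα`. -/
def inO (z : ℂ) : Prop := ∃ m n : ℤ, z = (m : ℂ) + (n : ℂ) * Kalpha

def Ke1 : Fin 3 → ℂ := ![0, Kalpha, Kalpha]
def Ke2 : Fin 3 → ℂ := ![0, 0, 2]
def Ke3 : Fin 3 → ℂ := ![1, 1, Kalphabar]

/-- Membership in the lattice `Λ = 𝒪e₁ + 𝒪e₂ + 𝒪e₃`. -/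
def inLambda (v : Fin 3 → ℂ) : Prop :=
  ∃ c1 c2 c3 : ℂ, inO c1 ∧ inO c2 ∧ inO c3 ∧ v = c1 • Ke1 + c2 • Ke2 + c3 • Ke3

def r1 : Matrix (Fin 3) (Fin 3) ℂ := !![1,0,0; 0,0,1; 0,1,0]
def r2 : Matrix (Fin 3) (Fin 3) ℂ := !![1,0,0; 0,1,0; 0,0,-1]
def r3 : Matrix (Fin 3) (Fin 3) ℂ :=
  (1/2 : ℂ) • !![1,-1,-Kalpha; -1,1,-Kalpha; -Kalphabar,-Kalphabar,0]


lemma Kalphabar_eq : Kalphabar = 1 - Kalpha := by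
  unfold Kalpha Kalphabar; ring

lemma Kalpha_mul_self : Kalpha * Kalpha = Kalpha - 2 := by
  have h7 : ((Real.sqrt 7 : ℝ) : ℂ) ^ 2 = 7 := by
    rw [← Complex.ofReal_pow, Real.sq_sqrt (by norm_num : (0 : ℝ) ≤ 7)]
    norm_num
  unfold Kalpha
  linear_combination (Complex.I ^ 2 / 4) * h7 + (7 / 4 : ℂ) * Complex.I_sq

lemma Kalpha_mul_Kalphabar : Kalpha * Kalphabar = 2 := by
  linear_combination Kalphabar_eq * Kalpha - Kalpha_mul_self

def ringO : Subring ℂ where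
  carrier := {z | inO z}
  one_mem' := ⟨1, 0, by push_cast; ring⟩
  zero_mem' := ⟨0, 0, by push_cast; ring⟩
  add_mem' := by
    rintro _ _ ⟨m, n, rfl⟩ ⟨p, q, rfl⟩
    exact ⟨m + p, n + q, by push_cast; ring⟩
  neg_mem' := by
    rintro _ ⟨m, n, rfl⟩
    exact ⟨-m, -n, by push_cast; ring⟩
  mul_mem' := by
    rintro _ _ ⟨m, n, rfl⟩ ⟨p, q, rfl⟩
    refine ⟨m * p - 2 * (n * q), m * q + n * p + n * q, ?_⟩
    push_cast
    linear_combination ((n : ℂ) * q) * Kalpha_mul_self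

lemma Kalpha_mem_ringO : Kalpha ∈ ringO := ⟨0, 1, by push_cast; ring⟩

lemma Kalphabar_mem_ringO : Kalphabar ∈ ringO := by
  rw [Kalphabar_eq]
  exact sub_mem (one_mem _) Kalpha_mem_ringO

lemma inLambda_of_mem {c1 c2 c3 : ℂ} (h1 : c1 ∈ ringO) (h2 : c2 ∈ ringO) (h3 : c3 ∈ ringO) :
    inLambda (c1 • Ke1 + c2 • Ke2 + c3 • Ke3) :=
  ⟨c1, c2, c3, h1, h2, h3, rfl⟩

lemma inLambda_add {v w : Fin 3 → ℂ} (hv : inLambda v) (hw : inLambda w) :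
    inLambda (v + w) := by
  obtain ⟨a1, a2, a3, ha1, ha2, ha3, rfl⟩ := hv
  obtain ⟨b1, b2, b3, hb1, hb2, hb3, rfl⟩ := hw
  convert inLambda_of_mem (add_mem ha1 hb1) (add_mem ha2 hb2) (add_mem ha3 hb3) using 1
  simp only [add_smul]
  abel

lemma inLambda_smul {c : ℂ} {v : Fin 3 → ℂ} (hc : c ∈ ringO) (hv : inLambda v) :
    inLambda (c • v) := by
  obtain ⟨a1, a2, a3, ha1, ha2, ha3, rfl⟩ := hv
  convert inLambda_of_mem (mul_mem hc ha1) (mul_mem hc ha2) (mul_mem hc ha3) using 1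
  simp only [smul_add, smul_smul]

lemma inLambda_neg {v : Fin 3 → ℂ} (hv : inLambda v) : inLambda (-v) := by
  simpa using inLambda_smul (neg_mem (one_mem ringO)) hv

lemma inLambda_sub {v w : Fin 3 → ℂ} (hv : inLambda v) (hw : inLambda w) :
    inLambda (v - w) := by
  simpa only [sub_eq_add_neg] using inLambda_add hv (inLambda_neg hw)

lemma inLambda_Ke1 : inLambda Ke1 := by
  simpa using inLambda_of_mem (one_mem ringO) (zero_mem ringO) (zero_mem ringO)

lemma inLambda_Ke2 : inLambda Ke2 := by
  simpa using inLambda_of_mem (zero_mem ringO) (one_mem ringO) (zero_mem ringO)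

lemma inLambda_Ke3 : inLambda Ke3 := by
  simpa using inLambda_of_mem (zero_mem ringO) (zero_mem ringO) (one_mem ringO)

def PreservesLambda (M : Matrix (Fin 3) (Fin 3) ℂ) : Prop :=
  ∀ v, inLambda v → inLambda (M.mulVec v)

lemma preservesLambda_of_basis {M : Matrix (Fin 3) (Fin 3) ℂ} (h1 : inLambda (M.mulVec Ke1))
    (h2 : inLambda (M.mulVec Ke2)) (h3 : inLambda (M.mulVec Ke3)) : PreservesLambda M := by
  rintro _ ⟨c1, c2, c3, hc1, hc2, hc3, rfl⟩
  simp only [Matrix.mulVec_add, Matrix.mulVec_smul]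
  exact inLambda_add (inLambda_add (inLambda_smul hc1 h1) (inLambda_smul hc2 h2))
    (inLambda_smul hc3 h3)

lemma r1_mulVec_Ke1 : r1.mulVec Ke1 = Ke1 := by
  ext i; fin_cases i <;> simp [r1, Ke1, Matrix.mulVec, dotProduct, Fin.sum_univ_three]

lemma r1_mulVec_Ke2 : r1.mulVec Ke2 = Kalphabar • Ke1 - Ke2 := by
  ext i; fin_cases i <;> simp [r1, Ke1, Ke2, Matrix.mulVec, dotProduct, Fin.sum_univ_three] <;>
    grind [Kalpha_mul_Kalphabar]

lemma r1_mulVec_Ke3 : r1.mulVec Ke3 = -Ke1 + Kalpha • Ke2 + Ke3 := by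
  ext i; fin_cases i <;>
    simp [r1, Ke1, Ke2, Ke3, Matrix.mulVec, dotProduct, Fin.sum_univ_three, Kalphabar_eq] <;> ring

lemma r2_mulVec_Ke1 : r2.mulVec Ke1 = Ke1 - Kalpha • Ke2 := by
  ext i; fin_cases i <;> simp [r2, Ke1, Ke2, Matrix.mulVec, dotProduct, Fin.sum_univ_three]; ring

lemma r2_mulVec_Ke2 : r2.mulVec Ke2 = -Ke2 := by
  ext i; fin_cases i <;> simp [r2, Ke2, Matrix.mulVec, dotProduct, Fin.sum_univ_three]

lemma r2_mulVec_Ke3 : r2.mulVec Ke3 = Ke3 - Kalphabar • Ke2 := by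
  ext i; fin_cases i <;> simp [r2, Ke2, Ke3, Matrix.mulVec, dotProduct, Fin.sum_univ_three]; ring

lemma r3_mulVec_Ke1 : r3.mulVec Ke1 = Ke1 + Kalphabar • Ke3 := by
  ext i; fin_cases i <;>
    simp [r3, Ke1, Ke3, Matrix.mulVec, dotProduct, Fin.sum_univ_three, Kalphabar_eq] <;>
    grind [Kalpha_mul_self]

lemma r3_mulVec_Ke2 : r3.mulVec Ke2 = Ke2 - Kalpha • Ke3 := by
  ext i; fin_cases i <;>
    simp [r3, Ke2, Ke3, Matrix.mulVec, dotProduct, Fin.sum_univ_three, Kalphabar_eq] <;>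
    grind [Kalpha_mul_self]

lemma r3_mulVec_Ke3 : r3.mulVec Ke3 = -Ke3 := by
  ext i; fin_cases i <;>
    simp [r3, Ke3, Matrix.mulVec, dotProduct, Fin.sum_univ_three, Kalphabar_eq] <;>
    grind [Kalpha_mul_self]

lemma preservesLambda_r1 : PreservesLambda r1 := by
  apply preservesLambda_of_basis
  · rw [r1_mulVec_Ke1]; exact inLambda_Ke1
  · rw [r1_mulVec_Ke2]
    exact inLambda_sub (inLambda_smul Kalphabar_mem_ringO inLambda_Ke1) inLambda_Ke2
  · rw [r1_mulVec_Ke3]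
    exact inLambda_add (inLambda_add (inLambda_neg inLambda_Ke1)
      (inLambda_smul Kalpha_mem_ringO inLambda_Ke2)) inLambda_Ke3

lemma preservesLambda_r2 : PreservesLambda r2 := by
  apply preservesLambda_of_basis
  · rw [r2_mulVec_Ke1]
    exact inLambda_sub inLambda_Ke1 (inLambda_smul Kalpha_mem_ringO inLambda_Ke2)
  · rw [r2_mulVec_Ke2]; exact inLambda_neg inLambda_Ke2
  · rw [r2_mulVec_Ke3]
    exact inLambda_sub inLambda_Ke3 (inLambda_smul Kalphabar_mem_ringO inLambda_Ke2)

lemma preservesLambda_r3 : PreservesLambda r3 := by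
  apply preservesLambda_of_basis
  · rw [r3_mulVec_Ke1]
    exact inLambda_add inLambda_Ke1 (inLambda_smul Kalphabar_mem_ringO inLambda_Ke3)
  · rw [r3_mulVec_Ke2]
    exact inLambda_sub inLambda_Ke2 (inLambda_smul Kalpha_mem_ringO inLambda_Ke3)
  · rw [r3_mulVec_Ke3]; exact inLambda_neg inLambda_Ke3

/-- Each of `r₁, r₂, r₃` maps `Λ = 𝒪e₁ + 𝒪e₂ + 𝒪e₃` into itself. -/
theorem generators_preserve_lattice :
    ∀ v : Fin 3 → ℂ, inLambda v →
      inLambda (r1.mulVec v) ∧ inLambda (r2.mulVec v) ∧ inLambda (r3.mulVec v) :=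
  fun v hv => ⟨preservesLambda_r1 v hv, preservesLambda_r2 v hv, preservesLambda_r3 v hv⟩

end
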